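/- arXiv:2411.15273 — 3 statements merged into one kernel-verified Lean document; each statement's English description precedes it below -/
import Mathlib

section
/- Let n ≥ 1 and equip M_n(ℂ) with the operator norm induced by the Euclidean norm, with Birkhoff–James orthogonality taken with complex scalars. Then every matrix unit E_{st} (the matrix with 1 in position (s,t) and 0 elsewhere) is a smooth point of M_n(ℂ): there is no matrix B ∈ M_n(ℂ) whose outgoing neighbourhood B^⊥ is a proper subset of (E_{st})^⊥. -/
open scoped Matrix.Norms.L2Operator

/-- Birkhoff–James orthogonality with complex scalars. -/
def BJ {E : Type*} [Norm E] [Add E] [SMul ℂ E] (u v : E) : Prop :=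
  ∀ c : ℂ, ‖u‖ ≤ ‖u + c • v‖

/-- The outgoing neighbourhood `v^⊥ = {u : v ⊥ u}`. -/
def perp {E : Type*} [Norm E] [Add E] [SMul ℂ E] (v : E) : Set E := {u | BJ v u}

/-!
If `A s t ≠ 0`, then `E_{st} - (ε / A s t) • A` has norm `< 1 = ‖E_{st}‖` for small `ε > 0`, so
every `A ∈ E_{st}^⊥` has `A s t = 0`. On the other hand, if `B` attains its norm at `x`, `‖x‖ ≤ 1`,
then every `A` with `⟪B x, A x⟫ = 0` lies in `B^⊥`. Hence `B^⊥ ⊆ E_{st}^⊥` puts the kernel of the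
functional `A ↦ ⟪B x, A x⟫` inside that of the nonzero functional `A ↦ A s t`; nested kernels of
linear functionals are equal once the larger one is proper, whence `E_{st}^⊥ ⊆ B^⊥`.
-/

open scoped InnerProductSpace
open InnerProductSpace

theorem LinearMap.ker_eq_ker_of_ker_le {K V : Type*} [Field K] [AddCommGroup V] [Module K V]
    {φ ψ : V →ₗ[K] K} (hψ : ψ ≠ 0) (h : ker φ ≤ ker ψ) : ker φ = ker ψ := by
  refine le_antisymm h fun v hv => ?_
  obtain ⟨e, he⟩ : ∃ e, ψ e ≠ 0 := DFunLike.ne_iff.mp hψ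
  have hφe : φ e ≠ 0 := fun h0 => he (h h0)
  have hmem : v - (φ v / φ e) • e ∈ ker φ := by
    simp [LinearMap.mem_ker, div_mul_cancel₀ _ hφe]
  rw [LinearMap.mem_ker] at hv
  simpa [hv, he, hφe] using h hmem

theorem ContinuousLinearMap.exists_norm_le_one_norm_apply_eq {𝕜 E F : Type*}
    [DenselyNormedField 𝕜] [NormedAddCommGroup E] [NormedSpace 𝕜 E] [ProperSpace E]
    [SeminormedAddCommGroup F] [NormedSpace 𝕜 F] (T : E →L[𝕜] F) :
    ∃ x, ‖x‖ ≤ 1 ∧ ‖T x‖ = ‖T‖ := by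
  have hK : IsCompact ((fun x => ‖T x‖) '' Metric.closedBall (0 : E) 1) :=
    (isCompact_closedBall 0 1).image (by fun_prop)
  obtain ⟨x, hx, hTx⟩ := hK.sSup_mem ((Metric.nonempty_closedBall.2 zero_le_one).image _)
  rw [T.sSup_unitClosedBall_eq_norm] at hTx
  exact ⟨x, mem_closedBall_zero_iff.1 hx, hTx⟩

section InnerProductSpace

variable {E F : Type*} [NormedAddCommGroup E] [InnerProductSpace ℂ E]
  [NormedAddCommGroup F] [InnerProductSpace ℂ F]

theorem bj_of_inner_apply_eq_zero {T S : E →L[ℂ] F} {x : E} (hx : ‖x‖ ≤ 1) (hTx : ‖T‖ ≤ ‖T x‖)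
    (h : ⟪T x, S x⟫_ℂ = 0) : BJ T S := by
  intro c
  have hpyth : ‖T x‖ * ‖T x‖ ≤ ‖T x + c • S x‖ * ‖T x + c • S x‖ := by
    rw [norm_add_sq_eq_norm_sq_add_norm_sq_of_inner_eq_zero (𝕜 := ℂ) _ _
      (by simp [inner_smul_right, h])]
    exact le_add_of_nonneg_right (mul_self_nonneg _)
  calc ‖T‖ ≤ ‖T x‖ := hTx
    _ ≤ ‖(T + c • S) x‖ := (mul_self_le_mul_self_iff (norm_nonneg _) (norm_nonneg _)).2 hpyth
    _ ≤ ‖T + c • S‖ * ‖x‖ := (T + c • S).le_opNorm x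
    _ ≤ ‖T + c • S‖ := mul_le_of_le_one_right (norm_nonneg _) hx

end InnerProductSpace

-- With `p = ‖⟪w, x⟫‖`, `q = ‖x - ⟪w, x⟫ • w‖` and `K = ‖A‖ / ‖⟪u, A w⟫‖`, the left side bounds
-- `‖(rankOne u w + c • A) x‖ ^ 2` for `c = -ε / ⟪u, A w⟫`, and `p ^ 2 + q ^ 2 = ‖x‖ ^ 2`.
theorem sq_sub_two_mul_add_le {ε K p q : ℝ} (hε : 0 ≤ ε) (hεK : 4 * ε * (K ^ 2 + 1) ≤ 1) :
    p ^ 2 - 2 * ε * p ^ 2 + 2 * (ε * K) * p * q + (ε * K) ^ 2 * (p ^ 2 + q ^ 2) ≤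
      (1 - ε / 4) ^ 2 * (p ^ 2 + q ^ 2) := by
  have hamgm : 2 * (ε * K) * p * q ≤ ε * p ^ 2 + ε * K ^ 2 * q ^ 2 := by
    nlinarith [mul_nonneg hε (sq_nonneg (p - K * q))]
  nlinarith [mul_nonneg (mul_nonneg hε hε) (sq_nonneg (K * p)), mul_nonneg hε (sq_nonneg p),
    mul_nonneg hε (sq_nonneg q), mul_nonneg hε (sq_nonneg (K * q)), sq_nonneg p, sq_nonneg q]

section RankOne

variable {𝕜 E F : Type*} [RCLike 𝕜] [NormedAddCommGroup E] [InnerProductSpace 𝕜 E]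
  [NormedAddCommGroup F] [InnerProductSpace 𝕜 F]

open RCLike ComplexConjugate

theorem norm_inner_sq_add_norm_sub_sq {w : E} (hw : ‖w‖ = 1) (x : E) :
    ‖⟪w, x⟫_𝕜‖ ^ 2 + ‖x - ⟪w, x⟫_𝕜 • w‖ ^ 2 = ‖x‖ ^ 2 := by
  have h : ⟪⟪w, x⟫_𝕜 • w, x - ⟪w, x⟫_𝕜 • w⟫_𝕜 = 0 := by
    rw [inner_smul_left, inner_sub_right, inner_smul_right, inner_self_eq_norm_sq_to_K, hw]
    simp
  have := norm_add_sq_eq_norm_sq_add_norm_sq_of_inner_eq_zero _ _ h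
  rw [add_sub_cancel, norm_smul, hw, mul_one] at this
  simpa only [sq] using this.symm

theorem norm_rankOne_add_smul_apply_sq_le {u : F} (hu : ‖u‖ = 1) (w : E) {A : E →L[𝕜] F}
    {c : 𝕜} {ε : ℝ} (hc : c * ⟪u, A w⟫_𝕜 = -ε) (x : E) :
    ‖(rankOne 𝕜 u w + c • A) x‖ ^ 2 ≤ ‖⟪w, x⟫_𝕜‖ ^ 2 - 2 * ε * ‖⟪w, x⟫_𝕜‖ ^ 2 +
      2 * (‖c‖ * ‖A‖) * ‖⟪w, x⟫_𝕜‖ * ‖x - ⟪w, x⟫_𝕜 • w‖ + (‖c‖ * ‖A‖) ^ 2 * ‖x‖ ^ 2 := by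
  set β := ⟪w, x⟫_𝕜
  set x' := x - β • w
  have hsplit : ⟪u, A x⟫_𝕜 = β * ⟪u, A w⟫_𝕜 + ⟪u, A x'⟫_𝕜 := by
    simp [x', inner_sub_right, inner_smul_right]
  have hcross : re ⟪β • u, c • A x⟫_𝕜 ≤ -ε * ‖β‖ ^ 2 + ‖c‖ * ‖A‖ * ‖β‖ * ‖x'‖ := by
    have hβ : conj β * β = (‖β‖ : 𝕜) ^ 2 := RCLike.conj_mul β
    have hexp : ⟪β • u, c • A x⟫_𝕜 = ((-ε * ‖β‖ ^ 2 : ℝ) : 𝕜) + conj β * c * ⟪u, A x'⟫_𝕜 := by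
      rw [inner_smul_left, inner_smul_right, hsplit]
      push_cast
      linear_combination (conj β * β) * hc - (ε : 𝕜) * hβ
    have hr : ‖⟪u, A x'⟫_𝕜‖ ≤ ‖A‖ * ‖x'‖ :=
      (norm_inner_le_norm u _).trans (by rw [hu, one_mul]; exact A.le_opNorm x')
    calc re ⟪β • u, c • A x⟫_𝕜
        = -ε * ‖β‖ ^ 2 + re (conj β * c * ⟪u, A x'⟫_𝕜) := by rw [hexp, map_add, ofReal_re]
      _ ≤ -ε * ‖β‖ ^ 2 + ‖β‖ * ‖c‖ * (‖A‖ * ‖x'‖) := by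
        gcongr
        refine (re_le_norm _).trans ?_
        rw [norm_mul, norm_mul, norm_conj]
        gcongr
      _ = -ε * ‖β‖ ^ 2 + ‖c‖ * ‖A‖ * ‖β‖ * ‖x'‖ := by ring
  have hlast : ‖c • A x‖ ≤ ‖c‖ * ‖A‖ * ‖x‖ := by
    rw [norm_smul, mul_assoc]
    gcongr
    exact A.le_opNorm x
  calc ‖(rankOne 𝕜 u w + c • A) x‖ ^ 2
      = ‖β‖ ^ 2 + 2 * re ⟪β • u, c • A x⟫_𝕜 + ‖c • A x‖ ^ 2 := by
        rw [add_apply, smul_apply, rankOne_apply,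
          norm_add_sq (𝕜 := 𝕜), norm_smul, hu, mul_one]
    _ ≤ _ := by
        have := pow_le_pow_left₀ (norm_nonneg _) hlast 2
        linarith

theorem exists_norm_rankOne_add_smul_lt_one {u : F} {w : E} (hu : ‖u‖ = 1) (hw : ‖w‖ = 1)
    {A : E →L[𝕜] F} (ha : ⟪u, A w⟫_𝕜 ≠ 0) : ∃ c : 𝕜, ‖rankOne 𝕜 u w + c • A‖ < 1 := by
  set K := ‖A‖ / ‖⟪u, A w⟫_𝕜‖
  set ε : ℝ := 1 / (4 * (K ^ 2 + 1))
  have hε : 0 < ε := by positivity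
  have hεK : 4 * ε * (K ^ 2 + 1) = 1 := by simp only [ε]; field_simp
  set c : 𝕜 := -ε / ⟪u, A w⟫_𝕜
  have hc : c * ⟪u, A w⟫_𝕜 = -ε := div_mul_cancel₀ _ ha
  have hcA : ‖c‖ * ‖A‖ = ε * K := by
    rw [norm_div, norm_neg, norm_ofReal, abs_of_pos hε]
    ring
  have hε4 : 0 ≤ 1 - ε / 4 := by nlinarith [sq_nonneg K]
  have hbound : ∀ x, ‖(rankOne 𝕜 u w + c • A) x‖ ≤ (1 - ε / 4) * ‖x‖ := by
    intro x
    have hsq := norm_rankOne_add_smul_apply_sq_le hu w hc x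
    rw [hcA, ← norm_inner_sq_add_norm_sub_sq (𝕜 := 𝕜) hw x] at hsq
    refine (pow_le_pow_iff_left₀ (norm_nonneg _) (by positivity) two_ne_zero).1 ?_
    rw [mul_pow, ← norm_inner_sq_add_norm_sub_sq (𝕜 := 𝕜) hw x]
    exact hsq.trans (sq_sub_two_mul_add_le hε.le hεK.le)
  exact ⟨c, (ContinuousLinearMap.opNorm_le_bound _ hε4 hbound).trans_lt (by linarith)⟩

end RankOne

theorem not_bj_rankOne {E F : Type*} [NormedAddCommGroup E] [InnerProductSpace ℂ E]
    [NormedAddCommGroup F] [InnerProductSpace ℂ F] {u : F} {w : E} (hu : ‖u‖ = 1) (hw : ‖w‖ = 1)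
    {A : E →L[ℂ] F} (ha : ⟪u, A w⟫_ℂ ≠ 0) : ¬ BJ (rankOne ℂ u w) A := by
  intro h
  obtain ⟨c, hc⟩ := exists_norm_rankOne_add_smul_lt_one hu hw ha
  have := h c
  rw [norm_rankOne, hu, hw, one_mul] at this
  linarith

namespace Matrix

section RCLike

variable {𝕜 n : Type*} [RCLike 𝕜] [Fintype n] [DecidableEq n]

theorem inner_single_toEuclideanCLM_single (A : Matrix n n 𝕜) (s t : n) :
    ⟪EuclideanSpace.single s (1 : 𝕜), toEuclideanCLM (𝕜 := 𝕜) A (EuclideanSpace.single t 1)⟫_𝕜 =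
      A s t := by
  simp [EuclideanSpace.inner_single_left, mulVec, dotProduct]

theorem toEuclideanCLM_single_one (s t : n) :
    toEuclideanCLM (𝕜 := 𝕜) (single s t (1 : 𝕜)) =
      rankOne 𝕜 (EuclideanSpace.single s 1) (EuclideanSpace.single t 1) := by
  ext x i
  rcases eq_or_ne i s with rfl | hi
  · simp [mulVec, dotProduct, single_apply, EuclideanSpace.inner_single_left]
  · simp [mulVec, dotProduct, hi, hi.symm]

end RCLike

variable {n : Type*} [Fintype n] [DecidableEq n]

theorem bj_toEuclideanCLM_iff (M N : Matrix n n ℂ) :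
    BJ (toEuclideanCLM (𝕜 := ℂ) M) (toEuclideanCLM (𝕜 := ℂ) N) ↔ BJ M N := by
  simp only [BJ, ← map_smul, ← map_add, ← cstar_norm_def]

theorem entry_eq_zero_of_bj_single {A : Matrix n n ℂ} {s t : n} (h : BJ (single s t (1 : ℂ)) A) :
    A s t = 0 := by
  by_contra ha
  rw [← bj_toEuclideanCLM_iff, toEuclideanCLM_single_one] at h
  exact not_bj_rankOne (by simp) (by simp) (by rwa [inner_single_toEuclideanCLM_single]) h

end Matrix

theorem stdBasisMatrix_smooth_general {n : ℕ} (s t : Fin n) :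
    ¬ ∃ B : Matrix (Fin n) (Fin n) ℂ, perp B ⊂ perp (Matrix.single s t (1 : ℂ)) := by
  rintro ⟨B, hBE⟩
  let T := Matrix.toEuclideanCLM (𝕜 := ℂ) (n := Fin n)
  obtain ⟨x, hx, hBx⟩ := (T B).exists_norm_le_one_norm_apply_eq
  let φ : Matrix (Fin n) (Fin n) ℂ →ₗ[ℂ] ℂ :=
    { toFun := fun A => ⟪T B x, T A x⟫_ℂ
      map_add' := fun A A' => by simp
      map_smul' := fun c A => by simp }
  have hφ : ∀ A, φ A = 0 → A ∈ perp B := fun A hA =>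
    (Matrix.bj_toEuclideanCLM_iff B A).1 (bj_of_inner_apply_eq_zero hx hBx.ge hA)
  have hker : LinearMap.ker φ ≤ LinearMap.ker (Matrix.entryLinearMap ℂ ℂ s t) := fun A hA =>
    Matrix.entry_eq_zero_of_bj_single (hBE.subset (hφ A hA))
  have hentry : Matrix.entryLinearMap ℂ ℂ s t ≠ 0 := fun h => by
    simpa using LinearMap.congr_fun h (Matrix.single s t 1)
  exact hBE.not_subset fun A hA =>
    hφ A ((LinearMap.ker_eq_ker_of_ker_le hentry hker).ge (Matrix.entry_eq_zero_of_bj_single hA))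

/-- Every matrix unit `E_{st}` is a smooth point of `M_n(ℂ)` (`n ≥ 1`, Euclidean operator
norm, complex scalars): no matrix `B` has `B^⊥` a proper subset of `(E_{st})^⊥`. -/
theorem stdBasisMatrix_smooth {n : ℕ} (hn : 1 ≤ n) (s t : Fin n) :
    ¬ ∃ B : Matrix (Fin n) (Fin n) ℂ, perp B ⊂ perp (Matrix.single s t (1 : ℂ)) :=
  stdBasisMatrix_smooth_general s t
end

section
/- Let V = {X ∈ M₂(ℂ) : X₁₁ = 0}, where M₂(ℂ) carries the operator norm induced by the Euclidean norm, and let ⊥ denote Birkhoff–James orthogonality with complex scalars. Let L_V be the set of elements of V that are left-symmetric relative to V. Then L_V contains a nonzero element, and the only X ∈ V satisfying Z ⊥ X for every Z ∈ L_V is X = 0. -/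
/-!
The Frobenius norm dominates the operator norm and agrees with it on a matrix unit
`E = single i j 1`, so `E ⊥ X` for the operator norm implies `E ⊥ X` for the Frobenius norm; the
latter is a Hilbert space norm, where Birkhoff–James orthogonality is ordinary orthogonality and
reads `X i j = 0`.

This shows that `E₁₂`, `E₂₁`, `E₂₂` are left-symmetric in `V`: if `E ⊥ B` with `B ∈ V`, then `B`
vanishes at the position of `E`, so `B` is a single row, a single column, or antidiagonal. In each
case `‖B‖` is bounded by a row norm, a column norm, or the largest entry of `B`, which `B + c • E`
shares with `B`, whence `B ⊥ E`. An `X ∈ V` orthogonal to these three units has all entries zero.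
-/

open scoped Matrix.Norms.L2Operator

/-- `A` is left-symmetric relative to the subset `S`. -/
def LeftSymmRel {E : Type*} [Norm E] [Add E] [SMul ℂ E] (S : Set E) (A : E) : Prop :=
  A ∈ S ∧ ∀ B ∈ S, BJ A B → BJ B A

/-- The subspace `V = {X ∈ M₂(ℂ) : X₁₁ = 0}`. -/
def V : Set (Matrix (Fin 2) (Fin 2) ℂ) := {X | X 0 0 = 0}

open Matrix WithLp

lemma BJ.inner_eq_zero {E : Type*} [NormedAddCommGroup E] [InnerProductSpace ℂ E] {u v : E}
    (h : BJ u v) : inner ℂ u v = 0 := by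
  rw [← inner_conj_symm, map_eq_zero]
  by_contra hw
  have hv : v ≠ 0 := by rintro rfl; simp at hw
  set w := inner ℂ v u with hw_def
  set t : ℝ := (‖v‖ ^ 2)⁻¹
  -- `u + (-(t * w)) • v` is `u` minus its projection onto `ℂ ∙ v`.
  have key : ‖u + (-(t * w)) • v‖ ^ 2 = ‖u‖ ^ 2 - t * ‖w‖ ^ 2 := by
    have ht : 0 ≤ t := by positivity
    rw [norm_add_sq (𝕜 := ℂ), inner_smul_right, norm_smul, ← inner_conj_symm u v, ← hw_def,
      neg_mul, mul_assoc, Complex.mul_conj']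
    simp only [norm_neg, norm_mul, Complex.norm_real, Real.norm_of_nonneg ht, RCLike.re_to_complex,
      Complex.neg_re, Complex.re_ofReal_mul, ← Complex.ofReal_pow, Complex.ofReal_re]
    have htv : t * ‖v‖ ^ 2 = 1 := inv_mul_cancel₀ (by positivity)
    linear_combination (t * ‖w‖ ^ 2) * htv
  have := pow_le_pow_left₀ (norm_nonneg _) (h (-(t * w))) 2
  have : 0 < t * ‖w‖ ^ 2 := by positivity
  linarith

namespace Matrix

variable {𝕜 m n : Type*} [RCLike 𝕜] [Fintype m] [Fintype n]

lemma norm_toLp_vec_sq (A : Matrix m n 𝕜) : ‖toLp 2 A.vec‖ ^ 2 = ∑ i, ∑ j, ‖A i j‖ ^ 2 := by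
  rw [EuclideanSpace.norm_sq_eq, Fintype.sum_prod_type, Finset.sum_comm]
  rfl

variable [DecidableEq n]

lemma l2_opNorm_le_norm_toLp_vec (A : Matrix m n 𝕜) : ‖A‖ ≤ ‖toLp 2 A.vec‖ := by
  rw [l2_opNorm_def]
  refine ContinuousLinearMap.opNorm_le_bound _ (norm_nonneg _) fun x => ?_
  refine (pow_le_pow_iff_left₀ (norm_nonneg _) (by positivity) two_ne_zero).1 ?_
  rw [mul_pow, norm_toLp_vec_sq, EuclideanSpace.norm_sq_eq, EuclideanSpace.norm_sq_eq,
    Finset.sum_mul]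
  refine Finset.sum_le_sum fun i _ => ?_
  calc ‖(A *ᵥ ofLp x) i‖ ^ 2 ≤ (∑ j, ‖A i j‖ * ‖x j‖) ^ 2 := by
        gcongr
        simpa only [mulVec, dotProduct, norm_mul] using norm_sum_le _ fun j => A i j * x j
    _ ≤ (∑ j, ‖A i j‖ ^ 2) * ∑ j, ‖x j‖ ^ 2 := Finset.sum_mul_sq_le_sq_mul_sq _ _ _

lemma sum_norm_sq_col_le_l2_opNorm_sq (A : Matrix m n 𝕜) (j : n) :
    ∑ i, ‖A i j‖ ^ 2 ≤ ‖A‖ ^ 2 := by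
  have h := l2_opNorm_mulVec A (EuclideanSpace.single j 1)
  rw [PiLp.norm_single, norm_one, mul_one] at h
  simpa [EuclideanSpace.norm_sq_eq, mulVec_single_one] using pow_le_pow_left₀ (norm_nonneg _) h 2

lemma sum_norm_sq_row_le_l2_opNorm_sq [DecidableEq m] (A : Matrix m n 𝕜) (i : m) :
    ∑ j, ‖A i j‖ ^ 2 ≤ ‖A‖ ^ 2 := by
  simpa [l2_opNorm_conjTranspose] using sum_norm_sq_col_le_l2_opNorm_sq Aᴴ i

lemma norm_entry_le_l2_opNorm (A : Matrix m n 𝕜) (i : m) (j : n) : ‖A i j‖ ≤ ‖A‖ := by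
  refine (pow_le_pow_iff_left₀ (norm_nonneg _) (norm_nonneg _) two_ne_zero).1 ?_
  exact (Finset.single_le_sum (fun k _ => sq_nonneg ‖A k j‖) (Finset.mem_univ i)).trans
    (sum_norm_sq_col_le_l2_opNorm_sq A j)

lemma l2_opNorm_le_add_of_col_support {B C : Matrix m n 𝕜} {j : n}
    (hB : ∀ i k, k ≠ j → B i k = 0) (hC : ∀ i, C i j = 0) : ‖B‖ ≤ ‖B + C‖ := by
  refine (pow_le_pow_iff_left₀ (norm_nonneg _) (norm_nonneg _) two_ne_zero).1 ?_
  calc ‖B‖ ^ 2 ≤ ‖toLp 2 B.vec‖ ^ 2 := by gcongr; exact l2_opNorm_le_norm_toLp_vec B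
    _ = ∑ i, ‖(B + C) i j‖ ^ 2 := by
      rw [norm_toLp_vec_sq]
      refine Finset.sum_congr rfl fun i _ => ?_
      rw [Finset.sum_eq_single j (fun k _ hk => by simp [hB i k hk]) (by simp), add_apply, hC,
        add_zero]
    _ ≤ ‖B + C‖ ^ 2 := sum_norm_sq_col_le_l2_opNorm_sq _ j

lemma l2_opNorm_le_add_of_row_support [DecidableEq m] {B C : Matrix m n 𝕜} {i : m}
    (hB : ∀ k j, k ≠ i → B k j = 0) (hC : ∀ j, C i j = 0) : ‖B‖ ≤ ‖B + C‖ := by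
  refine (pow_le_pow_iff_left₀ (norm_nonneg _) (norm_nonneg _) two_ne_zero).1 ?_
  calc ‖B‖ ^ 2 ≤ ‖toLp 2 B.vec‖ ^ 2 := by gcongr; exact l2_opNorm_le_norm_toLp_vec B
    _ = ∑ j, ‖(B + C) i j‖ ^ 2 := by
      rw [norm_toLp_vec_sq, Finset.sum_eq_single i (fun k _ hk => by simp [hB k _ hk]) (by simp)]
      simp [hC]
    _ ≤ ‖B + C‖ ^ 2 := sum_norm_sq_row_le_l2_opNorm_sq _ i

lemma l2_opNorm_le_max_of_diag_eq_zero {B : Matrix (Fin 2) (Fin 2) 𝕜} (h00 : B 0 0 = 0)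
    (h11 : B 1 1 = 0) : ‖B‖ ≤ max ‖B 0 1‖ ‖B 1 0‖ := by
  have hBB : Bᴴ * B = diagonal ![(‖B 1 0‖ ^ 2 : 𝕜), (‖B 0 1‖ ^ 2 : 𝕜)] := by
    ext i j
    fin_cases i <;> fin_cases j <;> simp [mul_apply, Fin.sum_univ_two, h00, h11, RCLike.conj_mul]
  have hmax : 0 ≤ max ‖B 0 1‖ ‖B 1 0‖ := (norm_nonneg _).trans (le_max_left _ _)
  refine (mul_self_le_mul_self_iff (norm_nonneg _) hmax).2 ?_
  rw [← l2_opNorm_conjTranspose_mul_self, hBB, l2_opNorm_diagonal,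
    pi_norm_le_iff_of_nonneg (mul_nonneg hmax hmax)]
  intro i
  fin_cases i
  · simpa [← sq] using pow_le_pow_left₀ (norm_nonneg _) (le_max_right ‖B 0 1‖ _) 2
  · simpa [← sq] using pow_le_pow_left₀ (norm_nonneg _) (le_max_left _ ‖B 1 0‖) 2

lemma apply_eq_zero_of_bj_single [DecidableEq m] {X : Matrix m n ℂ} {i : m} {j : n}
    (h : BJ (single i j (1 : ℂ)) X) : X i j = 0 := by
  have hE : ‖toLp 2 (single i j (1 : ℂ)).vec‖ ≤ ‖single i j (1 : ℂ)‖ := by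
    simpa [vec_single] using norm_entry_le_l2_opNorm (single i j (1 : ℂ)) i j
  have hvec : BJ (toLp 2 (single i j (1 : ℂ)).vec) (toLp 2 X.vec) := fun c =>
    calc _ ≤ _ := hE
      _ ≤ _ := h c
      _ ≤ _ := l2_opNorm_le_norm_toLp_vec _
      _ = _ := by rw [vec_add, vec_smul, toLp_add, toLp_smul]
  simpa [vec_single, EuclideanSpace.inner_single_left] using hvec.inner_eq_zero

end Matrix

lemma leftSymmRel_V_single {k l : Fin 2} (hV : single k l (1 : ℂ) ∈ V)
    (hnorm : ∀ B ∈ V, B k l = 0 → ∀ c : ℂ, ‖B‖ ≤ ‖B + c • single k l 1‖) :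
    LeftSymmRel V (single k l (1 : ℂ)) :=
  ⟨hV, fun B hB hEB c => hnorm B hB (apply_eq_zero_of_bj_single hEB) c⟩

lemma leftSymmRel_V_single_zero_one : LeftSymmRel V (single 0 1 (1 : ℂ)) := by
  refine leftSymmRel_V_single (by simp [V]) fun B (hB : B 0 0 = 0) h01 c => ?_
  refine l2_opNorm_le_add_of_row_support (i := 1) (fun k j hk => ?_) (by simp)
  fin_cases k <;> fin_cases j <;> simp_all

lemma leftSymmRel_V_single_one_zero : LeftSymmRel V (single 1 0 (1 : ℂ)) := by
  refine leftSymmRel_V_single (by simp [V]) fun B (hB : B 0 0 = 0) h10 c => ?_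
  refine l2_opNorm_le_add_of_col_support (j := 1) (fun i k hk => ?_) (by simp)
  fin_cases i <;> fin_cases k <;> simp_all

lemma leftSymmRel_V_single_one_one : LeftSymmRel V (single 1 1 (1 : ℂ)) := by
  refine leftSymmRel_V_single (by simp [V]) fun B (hB : B 0 0 = 0) h11 c => ?_
  refine (l2_opNorm_le_max_of_diag_eq_zero hB h11).trans (max_le ?_ ?_)
  · exact (norm_entry_le_l2_opNorm _ 0 1).trans_eq' (by simp)
  · exact (norm_entry_le_l2_opNorm _ 1 0).trans_eq' (by simp)

/-- The set `L_V` of left-symmetric elements of `V = {X ∈ M₂(ℂ) : X₁₁ = 0}` contains a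
nonzero element, and the only `X ∈ V` with `Z ⊥ X` for every `Z ∈ L_V` is `X = 0`. -/
theorem leftSymmetric_in_V_total :
    (∃ Z : Matrix (Fin 2) (Fin 2) ℂ, LeftSymmRel V Z ∧ Z ≠ 0) ∧
    ∀ X ∈ V, (∀ Z : Matrix (Fin 2) (Fin 2) ℂ, LeftSymmRel V Z → BJ Z X) → X = 0 := by
  refine ⟨⟨_, leftSymmRel_V_single_zero_one, fun h => by simpa using congr_fun₂ h 0 1⟩, ?_⟩
  intro X (hX : X 0 0 = 0) hL
  ext i j
  fin_cases i <;> fin_cases j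
  · exact hX
  · exact apply_eq_zero_of_bj_single (hL _ leftSymmRel_V_single_zero_one)
  · exact apply_eq_zero_of_bj_single (hL _ leftSymmRel_V_single_one_zero)
  · exact apply_eq_zero_of_bj_single (hL _ leftSymmRel_V_single_one_one)
end

section
/- Let a, b, q ∈ ℂ with q purely imaginary (Re q = 0) and |q| = 1, and let B ∈ M₂(ℂ) be the matrix with entries B₁₁ = 0, B₁₂ = q, B₂₁ = b, B₂₂ = a, where M₂(ℂ) carries the operator norm induced by the Euclidean norm on ℂ². Then ‖B‖² = (√((|a|² + |b|² + 1)² − 4|b|²) + |a|² + |b|² + 1)/2; moreover, setting λ = ‖B‖² − 1 − |a|² and x = (a·λ, conj(a)·b·a) ∈ ℂ², one has ‖Bx‖ = ‖B‖·‖x‖ and Re⟨Bx, E₁₂x⟩ = 0, where E₁₂ is the matrix unit with 1 in position (1,2). -/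
/-!
Writing `α = ‖a‖²`, `β = ‖b‖²`, the Gram matrix `BᴴB = !![β, b̄a; āb, 1 + α]` has larger
eigenvalue `N`, the root of `(N - β)(N - 1 - α) = αβ` displayed in the theorem.
The bound `‖By‖² ≤ N‖y‖²` reduces, after `|by₁ + ay₂| ≤ |b||y₁| + |a||y₂|`, to the AM–GM
inequality `2|a||b|uv ≤ (N - β)u² + (N - 1 - α)v²`, whose coefficients have product `αβ`.
Conversely every multiple `v` of `(N - 1 - α, āb)`, in particular `x`, satisfies
`‖Bv‖² = N‖v‖²`. Finally `E₁₂x = (x₂, 0)`, so `⟨E₁₂x, Bx⟩ = q|x₂|²` is purely imaginary.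
-/

open scoped Matrix.Norms.L2Operator

lemma two_mul_mul_le_of_sq_le_mul {P R c u v : ℝ} (hP : 0 ≤ P) (hR : 0 ≤ R) (h : c ^ 2 ≤ P * R) :
    2 * c * u * v ≤ P * u ^ 2 + R * v ^ 2 := by
  rcases hP.eq_or_lt with rfl | hP
  · obtain rfl : c = 0 := by nlinarith
    nlinarith
  · refine le_of_mul_le_mul_left ?_ hP
    nlinarith [sq_nonneg (P * u - c * v), mul_nonneg (sub_nonneg.2 h) (sq_nonneg v)]

/-- The larger eigenvalue of the real symmetric matrix `!![P, c; c, R]`. -/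
noncomputable def largerEigenvalue (P R c : ℝ) : ℝ :=
  (√((P + R) ^ 2 - 4 * (P * R - c ^ 2)) + (P + R)) / 2

section LargerEigenvalue

variable (P R c : ℝ)

lemma add_sq_sub_four_mul_sub_sq :
    (P + R) ^ 2 - 4 * (P * R - c ^ 2) = (P - R) ^ 2 + 4 * c ^ 2 := by
  ring

lemma abs_sub_le_two_mul_largerEigenvalue_sub : |P - R| ≤ 2 * largerEigenvalue P R c - (P + R) := by
  rw [largerEigenvalue, add_sq_sub_four_mul_sub_sq]
  have := Real.abs_le_sqrt (x := P - R) (le_add_of_nonneg_right (by positivity : 0 ≤ 4 * c ^ 2))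
  linarith

lemma left_le_largerEigenvalue : P ≤ largerEigenvalue P R c := by
  linarith [(abs_le.1 (abs_sub_le_two_mul_largerEigenvalue_sub P R c)).2]

lemma right_le_largerEigenvalue : R ≤ largerEigenvalue P R c := by
  linarith [(abs_le.1 (abs_sub_le_two_mul_largerEigenvalue_sub P R c)).1]

lemma largerEigenvalue_sub_mul_sub :
    (largerEigenvalue P R c - P) * (largerEigenvalue P R c - R) = c ^ 2 := by
  have h : √((P + R) ^ 2 - 4 * (P * R - c ^ 2)) ^ 2 = (P + R) ^ 2 - 4 * (P * R - c ^ 2) :=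
    Real.sq_sqrt (by rw [add_sq_sub_four_mul_sub_sq]; positivity)
  rw [largerEigenvalue]
  linear_combination h / 4

end LargerEigenvalue

lemma EuclideanSpace.norm_sq_fin_two {𝕜 : Type*} [RCLike 𝕜] (v : EuclideanSpace 𝕜 (Fin 2)) :
    ‖v‖ ^ 2 = ‖v 0‖ ^ 2 + ‖v 1‖ ^ 2 := by
  rw [EuclideanSpace.norm_sq_eq, Fin.sum_univ_two]

namespace Matrix

variable {𝕜 : Type*} [RCLike 𝕜]

section L2OpNorm

variable {m n : Type*} [Fintype m] [Fintype n] [DecidableEq n] {A : Matrix m n 𝕜} {N : ℝ}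

lemma l2_opNorm_sq_le (hN : 0 ≤ N) (h : ∀ y, ‖toEuclideanLin A y‖ ^ 2 ≤ N * ‖y‖ ^ 2) :
    ‖A‖ ^ 2 ≤ N := by
  have hA : ‖A‖ ≤ √N := by
    rw [l2_opNorm_def]
    refine ContinuousLinearMap.opNorm_le_bound _ (Real.sqrt_nonneg N) fun y => ?_
    rw [← Real.sqrt_sq (norm_nonneg y), ← Real.sqrt_mul hN]
    exact Real.le_sqrt_of_sq_le (h y)
  calc ‖A‖ ^ 2 ≤ √N ^ 2 := pow_le_pow_left₀ (norm_nonneg A) hA 2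
    _ = N := Real.sq_sqrt hN

lemma le_l2_opNorm_sq {v : EuclideanSpace 𝕜 n} (hv : v ≠ 0)
    (h : N * ‖v‖ ^ 2 ≤ ‖toEuclideanLin A v‖ ^ 2) : N ≤ ‖A‖ ^ 2 := by
  refine le_of_mul_le_mul_right ?_ (by positivity : 0 < ‖v‖ ^ 2)
  calc N * ‖v‖ ^ 2 ≤ ‖toEuclideanLin A v‖ ^ 2 := h
    _ ≤ (‖A‖ * ‖v‖) ^ 2 := pow_le_pow_left₀ (norm_nonneg _) (A.l2_opNorm_mulVec v) 2
    _ = ‖A‖ ^ 2 * ‖v‖ ^ 2 := mul_pow _ _ _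

end L2OpNorm

@[simp]
lemma toEuclideanLin_fin_two_apply_zero (p q r s : 𝕜) (v : EuclideanSpace 𝕜 (Fin 2)) :
    toEuclideanLin !![p, q; r, s] v 0 = p * v 0 + q * v 1 := by
  simp [toLpLin_apply, dotProduct, Fin.sum_univ_two]

@[simp]
lemma toEuclideanLin_fin_two_apply_one (p q r s : 𝕜) (v : EuclideanSpace 𝕜 (Fin 2)) :
    toEuclideanLin !![p, q; r, s] v 1 = r * v 0 + s * v 1 := by
  simp [toLpLin_apply, dotProduct, Fin.sum_univ_two]

lemma norm_sq_toEuclideanLin_fin_two (p q r s : 𝕜) (v : EuclideanSpace 𝕜 (Fin 2)) :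
    ‖toEuclideanLin !![p, q; r, s] v‖ ^ 2 = ‖p * v 0 + q * v 1‖ ^ 2 + ‖r * v 0 + s * v 1‖ ^ 2 := by
  rw [EuclideanSpace.norm_sq_fin_two, toEuclideanLin_fin_two_apply_zero,
    toEuclideanLin_fin_two_apply_one]

end Matrix

namespace QMatrix

open Matrix ComplexConjugate

variable {a b q : ℂ}

lemma norm_sq_toEuclideanLin_le (hq : ‖q‖ = 1) {N : ℝ} (hb : ‖b‖ ^ 2 ≤ N)
    (ha : 1 + ‖a‖ ^ 2 ≤ N) (h : (‖a‖ * ‖b‖) ^ 2 ≤ (N - ‖b‖ ^ 2) * (N - (1 + ‖a‖ ^ 2)))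
    (y : EuclideanSpace ℂ (Fin 2)) :
    ‖toEuclideanLin !![0, q; b, a] y‖ ^ 2 ≤ N * ‖y‖ ^ 2 := by
  have h_tri : ‖b * y 0 + a * y 1‖ ≤ ‖b‖ * ‖y 0‖ + ‖a‖ * ‖y 1‖ :=
    (norm_add_le _ _).trans_eq (by rw [norm_mul, norm_mul])
  have h_amgm := two_mul_mul_le_of_sq_le_mul (sub_nonneg.2 hb) (sub_nonneg.2 ha) h
    (u := ‖y 0‖) (v := ‖y 1‖)
  rw [norm_sq_toEuclideanLin_fin_two, EuclideanSpace.norm_sq_fin_two, zero_mul, zero_add,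
    norm_mul, hq, one_mul]
  nlinarith [pow_le_pow_left₀ (norm_nonneg _) h_tri 2]

lemma norm_sq_toEuclideanLin_single_one (hq : ‖q‖ = 1) :
    ‖toEuclideanLin !![0, q; b, a] (EuclideanSpace.single 1 1)‖ ^ 2 = 1 + ‖a‖ ^ 2 := by
  simp [norm_sq_toEuclideanLin_fin_two, hq]

/-- A multiple of an eigenvector of `BᴴB`, `B = !![0, q; b, a]`, for its larger eigenvalue `N`. -/
noncomputable def normingVector (a b c : ℂ) (N : ℝ) : EuclideanSpace ℂ (Fin 2) :=
  WithLp.toLp 2 ![c * ((N - 1 - ‖a‖ ^ 2 : ℝ) : ℂ), conj a * b * c]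

lemma norm_sq_toEuclideanLin_normingVector (hq : ‖q‖ = 1) {N : ℝ}
    (h : (N - ‖b‖ ^ 2) * (N - 1 - ‖a‖ ^ 2) = (‖a‖ * ‖b‖) ^ 2) (c : ℂ) :
    ‖toEuclideanLin !![0, q; b, a] (normingVector a b c N)‖ ^ 2 =
      N * ‖normingVector a b c N‖ ^ 2 := by
  have h_second : b * normingVector a b c N 0 + a * normingVector a b c N 1 =
      b * c * ((N - 1 : ℝ) : ℂ) := by
    simp only [normingVector, cons_val_zero, cons_val_one]
    push_cast
    linear_combination b * c * Complex.mul_conj' a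
  rw [norm_sq_toEuclideanLin_fin_two, EuclideanSpace.norm_sq_fin_two, h_second]
  simp only [normingVector, cons_val_zero, cons_val_one, zero_mul, zero_add, norm_mul, hq,
    one_mul, Complex.norm_real, Real.norm_eq_abs, RCLike.norm_conj, mul_pow, sq_abs]
  linear_combination -(‖c‖ ^ 2 * (N - 1 - ‖a‖ ^ 2)) * h

lemma le_l2_opNorm_sq (hq : ‖q‖ = 1) {N : ℝ}
    (h : (N - ‖b‖ ^ 2) * (N - 1 - ‖a‖ ^ 2) = (‖a‖ * ‖b‖) ^ 2) :
    N ≤ ‖!![0, q; b, a]‖ ^ 2 := by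
  -- For `N = 1 + ‖a‖²` the eigenvector may vanish (then `ab = 0`); `single 1 1` attains instead.
  by_cases hlam : N - 1 - ‖a‖ ^ 2 = 0
  · refine Matrix.le_l2_opNorm_sq (v := EuclideanSpace.single 1 1) (by simp) ?_
    rw [norm_sq_toEuclideanLin_single_one hq, PiLp.norm_single, norm_one, one_pow, mul_one]
    linarith
  · have hv : normingVector a b 1 N ≠ 0 := fun h0 => hlam <| by
      have h00 := congrArg (· 0) h0
      simp only [normingVector, one_mul, cons_val_zero, PiLp.zero_apply] at h00
      exact_mod_cast h00
    exact Matrix.le_l2_opNorm_sq hv (norm_sq_toEuclideanLin_normingVector hq h 1).ge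

lemma l2_opNorm_sq (hq : ‖q‖ = 1) :
    ‖!![0, q; b, a]‖ ^ 2 = largerEigenvalue (‖b‖ ^ 2) (1 + ‖a‖ ^ 2) (‖a‖ * ‖b‖) := by
  have hb := left_le_largerEigenvalue (‖b‖ ^ 2) (1 + ‖a‖ ^ 2) (‖a‖ * ‖b‖)
  have ha := right_le_largerEigenvalue (‖b‖ ^ 2) (1 + ‖a‖ ^ 2) (‖a‖ * ‖b‖)
  have h_eig := largerEigenvalue_sub_mul_sub (‖b‖ ^ 2) (1 + ‖a‖ ^ 2) (‖a‖ * ‖b‖)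
  refine le_antisymm ?_ (le_l2_opNorm_sq hq (by rw [← h_eig, sub_add_eq_sub_sub]))
  exact Matrix.l2_opNorm_sq_le ((sq_nonneg _).trans hb)
    (norm_sq_toEuclideanLin_le hq hb ha h_eig.ge)

lemma inner_single_toEuclideanLin (x : EuclideanSpace ℂ (Fin 2)) :
    inner ℂ (toEuclideanLin (single 0 1 (1 : ℂ)) x) (toEuclideanLin !![0, q; b, a] x) =
      q * (‖x 1‖ ^ 2 : ℝ) := by
  rw [eta_fin_two (single 0 1 1), PiLp.inner_apply, Fin.sum_univ_two]
  simp [RCLike.inner_apply, mul_assoc, Complex.mul_conj']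

lemma re_inner_single_toEuclideanLin (hq : q.re = 0) (x : EuclideanSpace ℂ (Fin 2)) :
    (inner ℂ (toEuclideanLin (single 0 1 (1 : ℂ)) x) (toEuclideanLin !![0, q; b, a] x)).re = 0 := by
  rw [inner_single_toEuclideanLin, Complex.re_mul_ofReal, hq, zero_mul]

end QMatrix

/-- For `q ∈ ℂ` purely imaginary and unimodular, the norm of `B = !![0, q; b, a]` in the
Euclidean operator norm is given by the stated formula, and with
`λ = ‖B‖² − 1 − |a|²` and `x = (a·λ, conj(a)·b·a)`, the vector `x` is norm-attaining for `B`
and `Re⟨Bx, E₁₂x⟩ = 0`. -/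
theorem norm_and_orthogonality_q_matrix' (a b q : ℂ) (hqim : q.re = 0) (hq : ‖q‖ = 1)
    (B : Matrix (Fin 2) (Fin 2) ℂ) (hB : B = !![0, q; b, a])
    (lam : ℝ) (hlam : lam = ‖B‖ ^ 2 - 1 - ‖a‖ ^ 2)
    (x : EuclideanSpace ℂ (Fin 2))
    (hx : x = (WithLp.equiv 2 (Fin 2 → ℂ)).symm ![a * (lam : ℂ), starRingEnd ℂ a * b * a]) :
    ‖B‖ ^ 2 = (Real.sqrt ((‖a‖ ^ 2 + ‖b‖ ^ 2 + 1) ^ 2 - 4 * ‖b‖ ^ 2)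
        + ‖a‖ ^ 2 + ‖b‖ ^ 2 + 1) / 2 ∧
    ‖Matrix.toEuclideanLin B x‖ = ‖B‖ * ‖x‖ ∧
    (inner (𝕜 := ℂ) (Matrix.toEuclideanLin (Matrix.single 0 1 (1 : ℂ)) x)
        (Matrix.toEuclideanLin B x)).re = 0 := by
  subst hB
  have hN := QMatrix.l2_opNorm_sq (a := a) (b := b) hq
  have h_eig : (‖!![0, q; b, a]‖ ^ 2 - ‖b‖ ^ 2) * (‖!![0, q; b, a]‖ ^ 2 - 1 - ‖a‖ ^ 2) =
      (‖a‖ * ‖b‖) ^ 2 := by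
    rw [hN, sub_sub, largerEigenvalue_sub_mul_sub]
  have hx' : x = QMatrix.normingVector a b a (‖!![0, q; b, a]‖ ^ 2) := by subst hx hlam; rfl
  refine ⟨by rw [hN, largerEigenvalue]; ring_nf, ?_,
    QMatrix.re_inner_single_toEuclideanLin hqim x⟩
  have h_attain := QMatrix.norm_sq_toEuclideanLin_normingVector hq h_eig a
  rw [← hx', ← mul_pow] at h_attain
  exact (sq_eq_sq₀ (norm_nonneg _) (mul_nonneg (norm_nonneg _) (norm_nonneg _))).1 h_attain
end
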